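/- arXiv:1603.03165 — 2 statements merged into one kernel-verified Lean document; each statement's English description precedes it below -/
import Mathlib

section
/- Location correspondence along traces (key induction step in the proof of Theorem 1): Let P and Q be programs, and let ι be a structure matching between P and Q with ι(l_init^P) = l_init^Q. Let ⟦P⟧(m) = (l_{1,1}, m_{1,1})⋯(l_{1,n}, m_{1,n}) and ⟦Q⟧(m̃) = (l_{2,1}, m_{2,1})⋯(l_{2,n}, m_{2,n}) be traces of the same length n (for arbitrary input memories m and m̃) such that m_{1,i}(cond') = m_{2,i}(cond') for all 1 ≤ i < n. Then l_{2,i} = ι(l_{1,i}) for all 1 ≤ i ≤ n. -/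
/-! Induction along the traces. Since `cond'` agrees at every step, both programs take the same
branch, and a structure matching commutes with taking a branch; the initial locations correspond
by assumption. -/

/-- Every variable type comes with the two distinguished special variables
`cond` and `ret`. -/
class SpecVars (V : Type) where
  cond : V
  ret : V

/-- Expressions over variables in `V`: unprimed variables `v`, primed
variables `v'`, constants, operation symbols and application. -/
inductive Expr (V : Type) : Type
  | var : V → Expr V
  | pvar : V → Expr V
  | const : ℕ → Expr V
  | op : ℕ → Expr V
  | app : Expr V → Expr V → Expr V

/-- The (primed/unprimed) variables occurring in an expression;
`(v, false)` stands for `v` and `(v, true)` for the primed variable `v'`. -/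
def Expr.fvars {V : Type} : Expr V → Set (V × Bool)
  | .var v => {(v, false)}
  | .pvar v => {(v, true)}
  | .const _ => ∅
  | .op _ => ∅
  | .app e₁ e₂ => e₁.fvars ∪ e₂.fvars

/-- Renaming the variables of an expression along `π` (this is `e[π]`). -/
def Expr.rename {V : Type} (π : V → V) : Expr V → Expr V
  | .var v => .var (π v)
  | .pvar v => .pvar (π v)
  | .const c => .const c
  | .op o => .op o
  | .app e₁ e₂ => .app (e₁.rename π) (e₂.rename π)

/-- A computation domain: a type with distinguished pairwise distinct values
`tt` (Boolean true), `ff` (Boolean false) and `bot` (the undefined value). -/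
structure CompDom (D : Type) where
  tt : D
  ff : D
  bot : D
  tt_ne_ff : tt ≠ ff
  tt_ne_bot : tt ≠ bot
  ff_ne_bot : ff ≠ bot

/-- A memory: a total map on variables and primed variables
(`(v, false)` is `v`, `(v, true)` is `v'`). -/
abbrev Memory (V D : Type) := V × Bool → D

/-- A program.  The successor function returns `none` for the distinguished
end location `l_end`. -/
structure Program (L V : Type) [SpecVars V] where
  locs : Finset L
  linit : L
  linit_mem : linit ∈ locs
  vars : Finset V
  cond_mem : SpecVars.cond ∈ vars
  ret_mem : SpecVars.ret ∈ vars
  label : L → V → Expr V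
  succ : L → Bool → Option L
  succ_mem : ∀ l ∈ locs, ∀ (b : Bool) (l' : L), succ l b = some l' → l' ∈ locs

/-- `IsTrace dom eval P mi τ` : `τ` is a trace of the program `P` on the input
memory `mi` (conditions (1)-(4) of the definition of the program semantics). -/
def IsTrace {L V D : Type} [SpecVars V] (dom : CompDom D)
    (eval : Expr V → Memory V D → Option D) (P : Program L V)
    (mi : Memory V D) (τ : List (L × Memory V D)) : Prop :=
  τ ≠ [] ∧
  (∀ (h : 0 < τ.length), (τ.get ⟨0, h⟩).1 = P.linit) ∧
  (∀ (h : 0 < τ.length), ∀ v ∈ P.vars, (τ.get ⟨0, h⟩).2 (v, false) = mi (v, false)) ∧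
  (∀ (i : ℕ) (h : i < τ.length), ∀ v ∈ P.vars,
    eval (P.label (τ.get ⟨i, h⟩).1 v) (τ.get ⟨i, h⟩).2
      = some ((τ.get ⟨i, h⟩).2 (v, true))) ∧
  (∀ (i : ℕ) (h : i + 1 < τ.length), ∀ v ∈ P.vars,
    (τ.get ⟨i + 1, h⟩).2 (v, false) = (τ.get ⟨i, Nat.lt_of_succ_lt h⟩).2 (v, true)) ∧
  (∀ (i : ℕ) (h : i + 1 < τ.length), ∃ b : Bool,
    (τ.get ⟨i, Nat.lt_of_succ_lt h⟩).2 (SpecVars.cond, true)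
      = (if b then dom.tt else dom.ff) ∧
    P.succ (τ.get ⟨i, Nat.lt_of_succ_lt h⟩).1 b = some (τ.get ⟨i + 1, h⟩).1) ∧
  (∀ (h : 0 < τ.length) (b : Bool),
    P.succ (τ.get ⟨τ.length - 1, Nat.sub_lt h Nat.one_pos⟩).1 b = none)

/-- Matching variables: `v₁ ∼_{τ₁,τ₂} v₂`. -/
def MatchVars {L₁ L₂ V₁ V₂ D : Type} (dom : CompDom D)
    (τ₁ : List (L₁ × Memory V₁ D)) (τ₂ : List (L₂ × Memory V₂ D))
    (v₁ : V₁) (v₂ : V₂) : Prop :=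
  ∀ (i : ℕ) (h₁ : i < τ₁.length) (h₂ : i < τ₂.length),
    (τ₁.get ⟨i, h₁⟩).2 (v₁, true) = dom.bot ∨
    (τ₁.get ⟨i, h₁⟩).2 (v₁, true) = (τ₂.get ⟨i, h₂⟩).2 (v₂, true)

/-- A structure matching between `P` and `Q` (the extension by
`ι(l_end) = l_end` is captured by `Option.map`). -/
def StructMatch {L V : Type} [SpecVars V] (P Q : Program L V) (ι : L → L) : Prop :=
  Set.BijOn ι ↑P.locs ↑Q.locs ∧
  ∀ l ∈ P.locs, ∀ b : Bool, Option.map ι (P.succ l b) = Q.succ (ι l) b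

/-- `P` matches `Q` on the set of inputs `I` with witness `(ι, σ)`,
written `P ≅_{I,ι,σ} Q`. -/
def Matches {L V D : Type} [SpecVars V] (dom : CompDom D)
    (eval : Expr V → Memory V D → Option D) (P Q : Program L V)
    (I : Set (Memory V D)) (ι : L → L) (σ : V → V) : Prop :=
  StructMatch P Q ι ∧
  Set.InjOn σ ↑P.vars ∧
  Set.MapsTo σ ↑P.vars ↑Q.vars ∧
  σ SpecVars.cond = SpecVars.cond ∧
  σ SpecVars.ret = SpecVars.ret ∧
  ∀ m ∈ I, ∃ τ₁ τ₂, IsTrace dom eval P m τ₁ ∧ IsTrace dom eval Q m τ₂ ∧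
    τ₁.length = τ₂.length ∧ ∀ v ∈ P.vars, MatchVars dom τ₁ τ₂ v (σ v)

theorem CompDom.ite_injective {D : Type} (dom : CompDom D) :
    Function.Injective (fun b : Bool => if b then dom.tt else dom.ff) := by
  intro b₁ b₂ h
  cases b₁ <;> cases b₂ <;> simp only at h
  · rfl
  · exact absurd h.symm dom.tt_ne_ff
  · exact absurd h dom.tt_ne_ff
  · rfl

section IsTrace

variable {L V D : Type} [SpecVars V] {dom : CompDom D}
  {eval : Expr V → Memory V D → Option D} {P : Program L V} {mi : Memory V D}
  {τ : List (L × Memory V D)}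

theorem IsTrace.fst_zero (h : IsTrace dom eval P mi τ) (hi : 0 < τ.length) :
    (τ.get ⟨0, hi⟩).1 = P.linit :=
  h.2.1 hi

theorem IsTrace.exists_cond_succ (h : IsTrace dom eval P mi τ) (i : ℕ) (hi : i + 1 < τ.length) :
    ∃ b : Bool, (τ.get ⟨i, Nat.lt_of_succ_lt hi⟩).2 (SpecVars.cond, true)
      = (if b then dom.tt else dom.ff) ∧
    P.succ (τ.get ⟨i, Nat.lt_of_succ_lt hi⟩).1 b = some (τ.get ⟨i + 1, hi⟩).1 :=
  h.2.2.2.2.2.1 i hi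

theorem IsTrace.fst_mem_locs (h : IsTrace dom eval P mi τ) :
    ∀ (i : ℕ) (hi : i < τ.length), (τ.get ⟨i, hi⟩).1 ∈ P.locs := by
  intro i
  induction i with
  | zero => intro hi; exact h.fst_zero hi ▸ P.linit_mem
  | succ j ih =>
    intro hi
    obtain ⟨b, -, hb⟩ := h.exists_cond_succ j hi
    exact P.succ_mem _ (ih _) b _ hb

theorem IsTrace.succ_fst_of_cond (h : IsTrace dom eval P mi τ) (i : ℕ) (hi : i + 1 < τ.length)
    (b : Bool) (hb : (τ.get ⟨i, Nat.lt_of_succ_lt hi⟩).2 (SpecVars.cond, true)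
      = if b then dom.tt else dom.ff) :
    P.succ (τ.get ⟨i, Nat.lt_of_succ_lt hi⟩).1 b = some (τ.get ⟨i + 1, hi⟩).1 := by
  obtain ⟨b', hb', h_succ⟩ := h.exists_cond_succ i hi
  obtain rfl : b = b' := dom.ite_injective (hb.symm.trans hb')
  exact h_succ

end IsTrace

theorem StructMatch.succ_eq_some {L V : Type} [SpecVars V] {P Q : Program L V} {ι : L → L}
    (hι : StructMatch P Q ι) {l l' : L} (hl : l ∈ P.locs) {b : Bool}
    (h : P.succ l b = some l') : Q.succ (ι l) b = some (ι l') := by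
  rw [← hι.2 l hl b, h, Option.map_some]

theorem location_correspondence_general {L V D : Type} [SpecVars V]
    (dom : CompDom D) (eval : Expr V → Memory V D → Option D)
    (P Q : Program L V) (ι : L → L)
    (hι : StructMatch P Q ι) (hinit : ι P.linit = Q.linit)
    (m mt : Memory V D) (τ₁ τ₂ : List (L × Memory V D))
    (h₁ : IsTrace dom eval P m τ₁) (h₂ : IsTrace dom eval Q mt τ₂)
    (hcond : ∀ (i : ℕ) (hi : i + 1 < τ₁.length) (hi' : i < τ₂.length),
      (τ₁.get ⟨i, Nat.lt_of_succ_lt hi⟩).2 (SpecVars.cond, true)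
        = (τ₂.get ⟨i, hi'⟩).2 (SpecVars.cond, true)) :
    ∀ (i : ℕ) (hi : i < τ₁.length) (hi' : i < τ₂.length),
      (τ₂.get ⟨i, hi'⟩).1 = ι (τ₁.get ⟨i, hi⟩).1 := by
  intro i
  induction i with
  | zero =>
    intro hi hi'
    rw [h₂.fst_zero hi', h₁.fst_zero hi, hinit]
  | succ j ih =>
    intro hi hi'
    obtain ⟨b, hb₁, hP⟩ := h₁.exists_cond_succ j hi
    have hQ := h₂.succ_fst_of_cond j hi' b (by rw [← hcond j hi, hb₁])
    have hP' := hι.succ_eq_some (h₁.fst_mem_locs j _) hP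
    rw [ih (Nat.lt_of_succ_lt hi) (Nat.lt_of_succ_lt hi'), hP'] at hQ
    exact (Option.some_injective _ hQ).symm

/-- Location correspondence along traces.  If `ι` is a structure
matching between `P` and `Q` with `ι(l_init^P) = l_init^Q`, and
`⟦P⟧(m)` and `⟦Q⟧(m̃)` are traces of the same length `n` whose memories agree
on `cond'` at all positions `1 ≤ i < n`, then `l_{2,i} = ι(l_{1,i})` for all
`1 ≤ i ≤ n`. -/
theorem location_correspondence {L V D : Type} [SpecVars V]
    (dom : CompDom D) (eval : Expr V → Memory V D → Option D)
    (P Q : Program L V) (ι : L → L)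
    (hι : StructMatch P Q ι) (hinit : ι P.linit = Q.linit)
    (m mt : Memory V D) (τ₁ τ₂ : List (L × Memory V D))
    (h₁ : IsTrace dom eval P m τ₁) (h₂ : IsTrace dom eval Q mt τ₂)
    (hlen : τ₁.length = τ₂.length)
    (hcond : ∀ (i : ℕ) (hi : i + 1 < τ₁.length) (hi' : i < τ₂.length),
      (τ₁.get ⟨i, Nat.lt_of_succ_lt hi⟩).2 (SpecVars.cond, true)
        = (τ₂.get ⟨i, hi'⟩).2 (SpecVars.cond, true)) :
    ∀ (i : ℕ) (hi : i < τ₁.length) (hi' : i < τ₂.length),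
      (τ₂.get ⟨i, hi'⟩).1 = ι (τ₁.get ⟨i, hi⟩).1 :=
  location_correspondence_general dom eval P Q ι hι hinit m mt τ₁ τ₂ h₁ h₂ hcond
end

section
/- Feasibility of the repair ILP (Part (1)(d) of the proof of Theorem 1): Let V_1 be a finite set of variables containing a subset S of special variables, let V_2 be a finite set with S ⊆ V_2, let L be a finite nonempty set of locations, and let ν and − be two symbols not in V_1 ∪ V_2. For each (l, v_1) ∈ L × V_1 let Π_{l,v_1} be a finite set of pairs (π, c), where π is a partial map from V_1 ∪ {−} to V_2 ∪ {ν} and c ∈ ℕ. Consider 0–1 variables x_{v_1 v_2} for (v_1, v_2) ∈ (V_1 ∪ {−}) × (V_2 ∪ {ν}) and x_m for each m ∈ ⋃ Π_{l,v_1}, subject to the constraints: (1) Σ_{v_2 ∈ V_2 ∪ {ν}} x_{v_1 v_2} = 1 for each v_1 ∈ V_1; (2) x_{v v} = 1 for each v ∈ S; (3) Σ_{v_1 ∈ V_1 ∪ {−}} x_{v_1 v_2} = 1 for each v_2 ∈ V_2; (4) Σ_{m ∈ Π_{l,v_1}} x_m = 1 for each (l, v_1) ∈ L × V_1; (5) −x_m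 + x_{u_1 u_2} ≥ 0 for each m = (π, c) and each pair with π(u_1) = u_2. Define σ_ν(v) = v for v ∈ S and σ_ν(v_1) = ν for v_1 ∈ V_1 ∖ S. If for every (l, v_1) ∈ L × V_1 the set Π_{l,v_1} contains some pair (π, c) whose partial map π is contained in σ_ν (as a set of argument–value pairs), then the constraint system is satisfiable by some 0–1 assignment. -/
/-!
Match every special variable with itself and every other variable of either program with the
fresh token `ν` (resp. the deletion token `−`). Because `S ⊆ V₁` and `S ⊆ V₂`, each row and each
column of this matching has exactly one entry, and selecting in every `Π_{l,v₁}` a conditional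
matching contained in `σ_ν` satisfies the implication constraints (5).
-/

section

variable {V : Type} [DecidableEq V]

/-- `none : Option V` encodes the fresh variable `ν` and, in the first component of a pair,
the deletion token `−`. -/
def sigmaNu (S : Finset V) (v : V) : Option V :=
  if v ∈ S then some v else none

def nuAssignment (V₁ V₂ S : Finset V) : Option V × Option V → ℕ
  | (some u, w) => if u ∈ V₁ ∧ w = sigmaNu S u then 1 else 0
  | (none, some w) => if w ∈ V₂ ∧ sigmaNu S w = none then 1 else 0
  | (none, none) => 0

variable {V₁ V₂ S : Finset V}

theorem sigmaNu_mem_insert_none_image_some {W : Finset V} (hSW : S ⊆ W) (v : V) :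
    sigmaNu S v ∈ insert none (W.image some) := by
  unfold sigmaNu
  split_ifs with hv
  · simp [hSW hv]
  · simp

theorem sigmaNu_eq_some_iff {u w : V} : sigmaNu S u = some w ↔ u = w ∧ u ∈ S := by
  unfold sigmaNu
  split_ifs with h <;> simp [h]

theorem sigmaNu_eq_some_comm {u w : V} : sigmaNu S u = some w ↔ sigmaNu S w = some u := by
  rw [sigmaNu_eq_some_iff, sigmaNu_eq_some_iff]
  constructor <;> rintro ⟨rfl, h⟩ <;> exact ⟨rfl, h⟩

theorem nuAssignment_le_one (p : Option V × Option V) : nuAssignment V₁ V₂ S p ≤ 1 := by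
  rcases p with ⟨_ | u, _ | w⟩ <;> simp [nuAssignment, apply_ite (· ≤ 1)]

theorem nuAssignment_some_sigmaNu {u : V} (hu : u ∈ V₁) :
    nuAssignment V₁ V₂ S (some u, sigmaNu S u) = 1 := by
  simp [nuAssignment, hu]

theorem nuAssignment_row_eq {u : V} (hu : u ∈ V₁) (w : Option V) :
    nuAssignment V₁ V₂ S (some u, w) = if sigmaNu S u = w then 1 else 0 := by
  simp [nuAssignment, hu, eq_comm]

theorem nuAssignment_column_eq {w : V} (hw : w ∈ V₂) {u : Option V}
    (hu : u ∈ insert none (V₁.image some)) :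
    nuAssignment V₁ V₂ S (u, some w) = if sigmaNu S w = u then 1 else 0 := by
  rcases u with _ | u
  · simp [nuAssignment, hw]
  · have hu : u ∈ V₁ := by simpa using hu
    simp [nuAssignment, hu, eq_comm (a := some w), sigmaNu_eq_some_comm]

theorem sum_nuAssignment_row (hS₂ : S ⊆ V₂) {u : V} (hu : u ∈ V₁) :
    ∑ w ∈ insert none (V₂.image some), nuAssignment V₁ V₂ S (some u, w) = 1 := by
  rw [Finset.sum_congr rfl fun w _ => nuAssignment_row_eq hu w, Finset.sum_ite_eq,
    if_pos (sigmaNu_mem_insert_none_image_some hS₂ u)]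

theorem sum_nuAssignment_column (hS₁ : S ⊆ V₁) {w : V} (hw : w ∈ V₂) :
    ∑ u ∈ insert none (V₁.image some), nuAssignment V₁ V₂ S (u, some w) = 1 := by
  rw [Finset.sum_congr rfl fun u hu => nuAssignment_column_eq hw hu, Finset.sum_ite_eq,
    if_pos (sigmaNu_mem_insert_none_image_some hS₁ w)]

theorem nuAssignment_diag (hS₁ : S ⊆ V₁) {v : V} (hv : v ∈ S) :
    nuAssignment V₁ V₂ S (some v, some v) = 1 := by
  simpa [sigmaNu, hv] using nuAssignment_some_sigmaNu (V₂ := V₂) (S := S) (hS₁ hv)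

theorem nuAssignment_eq_one_of_subset_sigmaNu {π : Option V → Option (Option V)}
    (hπ : ∀ u w, π u = some w → ∃ u' ∈ V₁, u = some u' ∧ w = sigmaNu S u')
    {u w : Option V} (huw : π u = some w) :
    nuAssignment V₁ V₂ S (u, w) = 1 := by
  obtain ⟨u', hu', rfl, rfl⟩ := hπ u w huw
  exact nuAssignment_some_sigmaNu hu'

end

theorem repair_ilp_feasible_general {V Λ : Type} [DecidableEq V]
    (V₁ V₂ S : Finset V) (hS₁ : S ⊆ V₁) (hS₂ : S ⊆ V₂)
    (L : Finset Λ)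
    (Pi : Λ → V → Set ((Option V → Option (Option V)) × ℕ))
    (hfin : ∀ l v, (Pi l v).Finite)
    (hfeas : ∀ l ∈ L, ∀ v₁ ∈ V₁, ∃ p ∈ Pi l v₁,
      ∀ (u w : Option V), p.1 u = some w →
        ∃ u' ∈ V₁, u = some u' ∧ w = (if u' ∈ S then some u' else none)) :
    ∃ (x : Option V × Option V → ℕ)
      (y : Λ → V → ((Option V → Option (Option V)) × ℕ) → ℕ),
      -- 0–1 assignment
      (∀ p, x p ≤ 1) ∧ (∀ l v₁ m, y l v₁ m ≤ 1) ∧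
      -- (1) each v₁ ∈ V₁ is matched to exactly one v₂ ∈ V₂ ∪ {ν}
      (∀ v₁ ∈ V₁, ∑ w ∈ insert none (V₂.image some), x (some v₁, w) = 1) ∧
      -- (2) each special variable is matched to itself
      (∀ v ∈ S, x (some v, some v) = 1) ∧
      -- (3) each v₂ ∈ V₂ is matched to exactly one v₁ ∈ V₁ ∪ {−}
      (∀ v₂ ∈ V₂, ∑ u ∈ insert none (V₁.image some), x (u, some v₂) = 1) ∧
      -- (4) for each (l, v₁) exactly one conditional matching is selected
      (∀ l ∈ L, ∀ v₁ ∈ V₁, ∑ m ∈ (hfin l v₁).toFinset, y l v₁ m = 1) ∧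
      -- (5) a selected conditional matching implies its variable pairs
      (∀ l ∈ L, ∀ v₁ ∈ V₁, ∀ m ∈ Pi l v₁, ∀ (u₁ u₂ : Option V),
        m.1 u₁ = some u₂ → y l v₁ m ≤ x (u₁, u₂)) := by
  classical
  choose! p hpPi hpσ using hfeas
  refine ⟨nuAssignment V₁ V₂ S, fun l v₁ m => if m = p l v₁ then 1 else 0,
    nuAssignment_le_one, fun _ _ _ => by dsimp only; split_ifs <;> norm_num,
    fun v₁ hv₁ => sum_nuAssignment_row hS₂ hv₁, fun v hv => nuAssignment_diag hS₁ hv,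
    fun v₂ hv₂ => sum_nuAssignment_column hS₁ hv₂, ?_, ?_⟩
  · intro l hl v₁ hv₁
    rw [Finset.sum_ite_eq', if_pos ((hfin l v₁).mem_toFinset.mpr (hpPi l hl v₁ hv₁))]
  · intro l hl v₁ hv₁ m _ u₁ u₂ hu
    dsimp only
    split_ifs with hm
    · subst hm
      exact (nuAssignment_eq_one_of_subset_sigmaNu (hpσ l hl v₁ hv₁) hu).ge
    · exact Nat.zero_le _

/-- Feasibility of the repair ILP.  Variables of the
specification are `V₁` (with special variables `S ⊆ V₁`), variables of the
implementation are `V₂` (with `S ⊆ V₂`), locations are `L` (finite,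
nonempty).  The token `ν` (fresh variable) is encoded by `none` in the second
component and the token `−` (deletion) by `none` in the first component of
`Option V`; a partial map `π` from `V₁ ∪ {−}` to `V₂ ∪ {ν}` is encoded as a
function `Option V → Option (Option V)` (outer `none` = undefined).  For each
`(l, v₁) ∈ L × V₁`, `Pi l v₁` is a finite set of conditional matchings
`(π, c)`.  A 0–1 assignment is given by `x : Option V × Option V → ℕ` (the
variables `x_{v₁v₂}`) and `y l v₁ m` (the variables `x_m` for
`m ∈ Pi l v₁`), all taking values in `{0, 1}`.  If every `Pi l v₁`
(for `l ∈ L`, `v₁ ∈ V₁`) contains a pair whose partial map is contained in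
`σ_ν` (where `σ_ν(v) = v` for `v ∈ S` and `σ_ν(v₁) = ν` for `v₁ ∈ V₁ ∖ S`),
then the constraint system (1)–(5) is satisfiable. -/
theorem repair_ilp_feasible {V Λ : Type} [DecidableEq V] [DecidableEq Λ]
    (V₁ V₂ S : Finset V) (hS₁ : S ⊆ V₁) (hS₂ : S ⊆ V₂)
    (L : Finset Λ) (hL : L.Nonempty)
    (Pi : Λ → V → Set ((Option V → Option (Option V)) × ℕ))
    (hfin : ∀ l v, (Pi l v).Finite)
    (hfeas : ∀ l ∈ L, ∀ v₁ ∈ V₁, ∃ p ∈ Pi l v₁,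
      ∀ (u w : Option V), p.1 u = some w →
        ∃ u' ∈ V₁, u = some u' ∧ w = (if u' ∈ S then some u' else none)) :
    ∃ (x : Option V × Option V → ℕ)
      (y : Λ → V → ((Option V → Option (Option V)) × ℕ) → ℕ),
      -- 0–1 assignment
      (∀ p, x p ≤ 1) ∧ (∀ l v₁ m, y l v₁ m ≤ 1) ∧
      -- (1) each v₁ ∈ V₁ is matched to exactly one v₂ ∈ V₂ ∪ {ν}
      (∀ v₁ ∈ V₁, ∑ w ∈ insert none (V₂.image some), x (some v₁, w) = 1) ∧
      -- (2) each special variable is matched to itself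
      (∀ v ∈ S, x (some v, some v) = 1) ∧
      -- (3) each v₂ ∈ V₂ is matched to exactly one v₁ ∈ V₁ ∪ {−}
      (∀ v₂ ∈ V₂, ∑ u ∈ insert none (V₁.image some), x (u, some v₂) = 1) ∧
      -- (4) for each (l, v₁) exactly one conditional matching is selected
      (∀ l ∈ L, ∀ v₁ ∈ V₁, ∑ m ∈ (hfin l v₁).toFinset, y l v₁ m = 1) ∧
      -- (5) a selected conditional matching implies its variable pairs
      (∀ l ∈ L, ∀ v₁ ∈ V₁, ∀ m ∈ Pi l v₁, ∀ (u₁ u₂ : Option V),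
        m.1 u₁ = some u₂ → y l v₁ m ≤ x (u₁, u₂)) :=
  repair_ilp_feasible_general V₁ V₂ S hS₁ hS₂ L Pi hfin hfeas
end
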